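/- (Theorem 1, KL part.) Let r > 0, W > 0, and let (y_{1,1},…,y_{1,n}) and (y_{2,1},…,y_{2,n}) be two datasets in Y^n with max_i ‖y_{1,i}‖ < r and max_i ‖y_{2,i}‖ < r. Under Assumptions 1–2, there exist constants a, b > 0 depending only on the prior ρ0 and on r such that the Gibbs posteriors ρ̂_{n,1}^W and ρ̂_{n,2}^W built from the two datasets satisfy max( D_KL(ρ̂_{n,1}^W‖ρ̂_{n,2}^W), D_KL(ρ̂_{n,2}^W‖ρ̂_{n,1}^W) ) ≤ a W (1 + e^{bnW})² ∑_{i=1}^n ‖y_{1,i} − y_{2,i}‖. -/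

import Mathlib

open MeasureTheory Real Filter Topology
open scoped ENNReal NNReal

noncomputable section

abbrev Par (p : ℕ) := EuclideanSpace ℝ (Fin p)
abbrev Obs (d : ℕ) := EuclideanSpace ℝ (Fin d)

open scoped Classical in
/-- Kullback–Leibler divergence; `⊤` if `μ` is not absolutely continuous w.r.t. `ν`
or the log-density is not integrable. -/
noncomputable def klDiv {α : Type*} [MeasurableSpace α] (μ ν : Measure α) : EReal :=
  if μ ≪ ν ∧ Integrable (fun x => Real.log (μ.rnDeriv ν x).toReal) μ
  then ((∫ x, Real.log (μ.rnDeriv ν x).toReal ∂μ : ℝ) : EReal)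
  else ⊤

/-- Squared Hellinger distance. -/
noncomputable def hellingerSq {α : Type*} [MeasurableSpace α] (μ ν : Measure α) : ℝ :=
  (1 / 2) * ∫ x, (Real.sqrt ((μ.rnDeriv (μ + ν) x).toReal)
      - Real.sqrt ((ν.rnDeriv (μ + ν) x).toReal)) ^ 2 ∂(μ + ν)

/-- Empirical risk `R_n`. -/
noncomputable def empRisk {p d n : ℕ} (L : Par p → Obs d → ℝ) (ys : Fin n → Obs d)
    (θ : Par p) : ℝ :=
  (1 / (n : ℝ)) * ∑ i, L θ (ys i)

/-- Partition function `Z_n^W`. -/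
noncomputable def partition {p d n : ℕ} (ρ0 : Measure (Par p)) (L : Par p → Obs d → ℝ)
    (ys : Fin n → Obs d) (W : ℝ) : ℝ :=
  ∫ θ, Real.exp (-(n * W) * empRisk L ys θ) ∂ρ0

/-- Gibbs posterior `ρ̂_n^W`. -/
noncomputable def gibbs {p d n : ℕ} (ρ0 : Measure (Par p)) (L : Par p → Obs d → ℝ)
    (ys : Fin n → Obs d) (W : ℝ) : Measure (Par p) :=
  ρ0.withDensity
    (fun θ => ENNReal.ofReal (Real.exp (-(n * W) * empRisk L ys θ) / partition ρ0 L ys W))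

/-- Assumption 1 on the loss. -/
structure Assumption1 {p d : ℕ} (ρ0 : Measure (Par p)) (P : Measure (Obs d))
    (L : Par p → Obs d → ℝ) : Prop where
  measurable : Measurable (Function.uncurry L)
  nonneg : ∀ θ y, 0 ≤ L θ y
  dominated : ∃ K : Par p × Obs d → ℝ, Integrable K (ρ0.prod P) ∧ ∀ θ y, L θ y ≤ K (θ, y)
  lipschitz_param : ∀ r > 0, ∃ C1 : Obs d → ℝ, (∀ y, 0 ≤ C1 y) ∧ Integrable C1 P ∧
    ∀ θ1 θ2 y, ‖θ1‖ < r → ‖θ2‖ < r → |L θ1 y - L θ2 y| ≤ C1 y * ‖θ1 - θ2‖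
  lipschitz_data : ∀ r > 0, ∃ C2 : Par p → ℝ, (∀ θ, 0 ≤ C2 θ) ∧
    Integrable (fun θ => Real.exp (C2 θ)) ρ0 ∧
    ∀ θ y1 y2, ‖y1‖ < r → ‖y2‖ < r → |L θ y1 - L θ y2| ≤ C2 θ * ‖y1 - y2‖

/-- Assumption 2 on the prior: everywhere-positive, locally log-Lipschitz Lebesgue density. -/
structure Assumption2 {p : ℕ} (ρ0 : Measure (Par p)) (f : Par p → ℝ) : Prop where
  density : ρ0 = volume.withDensity (fun θ => ENNReal.ofReal (f θ))
  pos : ∀ θ, 0 < f θ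
  logLip : ∀ r > 0, ∃ C3 : ℝ, ∀ θ1 θ2, ‖θ1‖ < r → ‖θ2‖ < r →
    |Real.log (f θ1) - Real.log (f θ2)| ≤ C3 * ‖θ1 - θ2‖

/-!
Both posteriors are tilts `ρ0.tilted (-Vⱼ)` of the prior by the potentials
`Vⱼ θ = W ∑ᵢ L θ y_{j,i} ≥ 0`, so `D_KL(ρ̂₁‖ρ̂₂) = ∫ (V₂ - V₁) dρ̂₁ + log (Z₂ / Z₁)`. The
Lipschitz bound in the data gives `|V₁ - V₂| ≤ c := W C₂ ∑ᵢ ‖y_{1,i} - y_{2,i}‖`. Since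
`dρ̂₁/dρ0 ≤ 1 / Z₁`, the first term is at most `∫ c dρ0 / Z₁`; since `x ↦ e^{-x}` is
1-Lipschitz on `[0, ∞)`, `log (Z₂ / Z₁) ≤ (Z₂ - Z₁) / Z₁ ≤ ∫ c dρ0 / Z₁` as well.
For the normalising constant, `L θ y ≤ L θ 0 + r C₂ θ` on the ball of radius `r`, and
`{θ | L θ 0 + r C₂ θ ≤ M}` has positive prior mass `δ` for some `M`, whence
`Z₁ ≥ δ e^{-nWM}` uniformly in the data.
-/

lemma Real.exp_neg_sub_exp_neg_le_abs {a b : ℝ} (hb : 0 ≤ b) : exp (-b) - exp (-a) ≤ |a - b| :=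
  calc exp (-b) - exp (-a) = exp (-b) * (1 - exp (b - a)) := by
        rw [mul_sub, mul_one, ← exp_add]; ring_nf
    _ ≤ exp (-b) * |a - b| := by
        gcongr
        linarith [add_one_le_exp (b - a), le_abs_self (a - b)]
    _ ≤ |a - b| := mul_le_of_le_one_left (abs_nonneg _) (exp_le_one_iff.mpr (neg_nonpos.mpr hb))

lemma div_le_mul_one_add_exp_sq {A δ Z M W : ℝ} {n : ℕ} (hA : 0 ≤ A) (hδ : 0 < δ)
    (hW : 0 ≤ W) (hZ : δ * exp (-(n * W * M)) ≤ Z) :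
    A / Z ≤ (A / δ + 1) * (1 + exp ((M + 1) * n * W)) ^ 2 := by
  have hexp : exp (n * W * M) ≤ (1 + exp ((M + 1) * n * W)) ^ 2 := by
    have : exp (n * W * M) ≤ exp ((M + 1) * n * W) := exp_le_exp.mpr (by nlinarith)
    nlinarith [exp_pos ((M + 1) * n * W)]
  calc A / Z ≤ A / (δ * exp (-(n * W * M))) := div_le_div_of_nonneg_left hA (by positivity) hZ
    _ = A / δ * exp (n * W * M) := by rw [exp_neg]; field_simp
    _ ≤ (A / δ + 1) * (1 + exp ((M + 1) * n * W)) ^ 2 := by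
        gcongr
        linarith

namespace MeasureTheory

variable {α : Type*} [MeasurableSpace α] {ρ : Measure α}

lemma llr_tilted_tilted [SigmaFinite ρ] {f g : α → ℝ}
    (hf : Integrable (fun x ↦ exp (f x)) ρ) (hg : Integrable (fun x ↦ exp (g x)) ρ) :
    llr (ρ.tilted f) (ρ.tilted g) =ᵐ[ρ.tilted f]
      fun x ↦ f x - g x + log (∫ z, exp (g z) ∂ρ) - log (∫ z, exp (f z) ∂ρ) := by
  have hac := tilted_absolutelyContinuous ρ f
  filter_upwards [llr_tilted_right hac hg, hac.ae_le (log_rnDeriv_tilted_left_self hf)]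
    with x hright hleft
  simp only [hright, llr_def, hleft]
  ring

lemma integrable_exp_neg_of_nonneg [IsFiniteMeasure ρ] {V : α → ℝ} (hV : AEMeasurable V ρ)
    (hV0 : ∀ᵐ x ∂ρ, 0 ≤ V x) : Integrable (fun x ↦ exp (-V x)) ρ := by
  refine .of_bound (hV.neg.exp.aestronglyMeasurable) 1 ?_
  filter_upwards [hV0] with x hx
  rw [norm_of_nonneg (exp_pos _).le]
  exact exp_le_one_iff.mpr (neg_nonpos.mpr hx)

lemma exists_measure_setOf_le_natCast_ne_zero [NeZero ρ] (ψ : α → ℝ) :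
    ∃ M : ℕ, ρ {x | ψ x ≤ M} ≠ 0 := by
  by_contra! h
  have hcover : (⋃ M : ℕ, {x | ψ x ≤ M}) = Set.univ :=
    Set.eq_univ_of_forall fun x ↦ Set.mem_iUnion.mpr (exists_nat_ge (ψ x))
  exact NeZero.ne ρ (Measure.measure_univ_eq_zero.mp (hcover ▸ measure_iUnion_null h))

variable [IsFiniteMeasure ρ] {V V₁ V₂ c : α → ℝ}

lemma integral_exp_neg_sub_integral_exp_neg_le (hV₁ : AEMeasurable V₁ ρ) (hV₂ : AEMeasurable V₂ ρ)
    (hV₁0 : ∀ᵐ x ∂ρ, 0 ≤ V₁ x) (hV₂0 : ∀ᵐ x ∂ρ, 0 ≤ V₂ x) (hc : Integrable c ρ)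
    (hV₁₂ : ∀ᵐ x ∂ρ, |V₁ x - V₂ x| ≤ c x) :
    ∫ x, exp (-V₂ x) ∂ρ - ∫ x, exp (-V₁ x) ∂ρ ≤ ∫ x, c x ∂ρ := by
  rw [← integral_sub (integrable_exp_neg_of_nonneg hV₂ hV₂0)
    (integrable_exp_neg_of_nonneg hV₁ hV₁0)]
  refine integral_mono_ae ((integrable_exp_neg_of_nonneg hV₂ hV₂0).sub
    (integrable_exp_neg_of_nonneg hV₁ hV₁0)) hc ?_
  filter_upwards [hV₂0, hV₁₂] with x hx hcx
  exact (Real.exp_neg_sub_exp_neg_le_abs hx).trans hcx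

lemma integral_tilted_exp_neg_le [NeZero ρ] (hV : AEMeasurable V ρ) (hV0 : ∀ᵐ x ∂ρ, 0 ≤ V x)
    (hc : Integrable c ρ) (hc0 : ∀ᵐ x ∂ρ, 0 ≤ c x) :
    ∫ x, c x ∂(ρ.tilted fun x ↦ -V x) ≤ (∫ x, c x ∂ρ) / ∫ x, exp (-V x) ∂ρ := by
  set Z := ∫ x, exp (-V x) ∂ρ
  have hZ : 0 < Z := integral_exp_pos (integrable_exp_neg_of_nonneg hV hV0)
  have hdens : ∀ᵐ x ∂ρ, exp (-V x) / Z ≤ Z⁻¹ := by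
    filter_upwards [hV0] with x hx
    rw [div_eq_mul_inv]
    exact mul_le_of_le_one_left (inv_nonneg.mpr hZ.le) (exp_le_one_iff.mpr (neg_nonpos.mpr hx))
  calc ∫ x, c x ∂(ρ.tilted fun x ↦ -V x) = ∫ x, exp (-V x) / Z * c x ∂ρ := integral_tilted _ _
    _ ≤ ∫ x, Z⁻¹ * c x ∂ρ := by
        refine integral_mono_ae ?_ (hc.const_mul _) ?_
        · refine hc.bdd_mul (c := Z⁻¹) (hV.neg.exp.div_const _).aestronglyMeasurable ?_
          filter_upwards [hdens] with x hx
          rwa [norm_of_nonneg (by positivity)]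
        · filter_upwards [hdens, hc0] with x hx hcx
          exact mul_le_mul_of_nonneg_right hx hcx
    _ = (∫ x, c x ∂ρ) / Z := by rw [integral_const_mul, inv_mul_eq_div]

lemma measureReal_mul_exp_neg_le_integral_exp_neg
    (hV : Integrable (fun x ↦ exp (-V x)) ρ) {s : Set α} (hs : MeasurableSet s) {M : ℝ}
    (hVs : ∀ᵐ x ∂ρ, x ∈ s → V x ≤ M) :
    ρ.real s * exp (-M) ≤ ∫ x, exp (-V x) ∂ρ :=
  calc ρ.real s * exp (-M) = ∫ _ in s, exp (-M) ∂ρ := (setIntegral_const _).symm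
    _ ≤ ∫ x in s, exp (-V x) ∂ρ := by
        refine setIntegral_mono_ae_restrict integrableOn_const hV.integrableOn ?_
        filter_upwards [(ae_restrict_iff' hs).mpr hVs] with x hx
        exact exp_le_exp.mpr (neg_le_neg hx)
    _ ≤ ∫ x, exp (-V x) ∂ρ := setIntegral_le_integral hV (ae_of_all _ fun _ ↦ (exp_pos _).le)

end MeasureTheory

section TiltedKL

variable {α : Type*} [MeasurableSpace α] {ρ : Measure α}

lemma klDiv_tilted_tilted [SigmaFinite ρ] [NeZero ρ] {f g : α → ℝ}
    (hf : Integrable (fun x ↦ exp (f x)) ρ) (hg : Integrable (fun x ↦ exp (g x)) ρ)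
    (hfg : Integrable (fun x ↦ f x - g x) (ρ.tilted f)) :
    klDiv (ρ.tilted f) (ρ.tilted g) =
      ((∫ x, (f x - g x) ∂(ρ.tilted f) + log (∫ x, exp (g x) ∂ρ)
        - log (∫ x, exp (f x) ∂ρ) : ℝ) : EReal) := by
  have := isProbabilityMeasure_tilted hf
  have hllr := llr_tilted_tilted hf hg
  have hac : ρ.tilted f ≪ ρ.tilted g :=
    (tilted_absolutelyContinuous ρ f).trans (absolutelyContinuous_tilted hg)
  have hint : Integrable (llr (ρ.tilted f) (ρ.tilted g)) (ρ.tilted f) :=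
    ((hfg.add (integrable_const _)).sub (integrable_const _)).congr hllr.symm
  rw [klDiv, if_pos ⟨hac, hint⟩, ← llr_def, integral_congr_ae hllr,
    integral_sub (f := fun x ↦ f x - g x + _) (hfg.add (integrable_const _)) (integrable_const _),
    integral_add (f := fun x ↦ f x - g x) hfg (integrable_const _)]
  simp

variable [IsFiniteMeasure ρ] [NeZero ρ] {V₁ V₂ c : α → ℝ}

lemma klDiv_tilted_exp_neg_le (hV₁ : AEMeasurable V₁ ρ) (hV₂ : AEMeasurable V₂ ρ)
    (hV₁0 : ∀ᵐ x ∂ρ, 0 ≤ V₁ x) (hV₂0 : ∀ᵐ x ∂ρ, 0 ≤ V₂ x) (hc : Integrable c ρ)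
    (hV₁₂ : ∀ᵐ x ∂ρ, |V₁ x - V₂ x| ≤ c x) :
    klDiv (ρ.tilted fun x ↦ -V₁ x) (ρ.tilted fun x ↦ -V₂ x) ≤
      ((2 * (∫ x, c x ∂ρ) / ∫ x, exp (-V₁ x) ∂ρ : ℝ) : EReal) := by
  set Z₁ := ∫ x, exp (-V₁ x) ∂ρ
  set Z₂ := ∫ x, exp (-V₂ x) ∂ρ
  have hexp₁ := integrable_exp_neg_of_nonneg hV₁ hV₁0
  have hexp₂ := integrable_exp_neg_of_nonneg hV₂ hV₂0
  have hZ₁ : 0 < Z₁ := integral_exp_pos hexp₁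
  have hZ₂ : 0 < Z₂ := integral_exp_pos hexp₂
  have hac := tilted_absolutelyContinuous ρ fun x ↦ -V₁ x
  have hc0 : ∀ᵐ x ∂ρ, 0 ≤ c x := hV₁₂.mono fun x hx ↦ (abs_nonneg _).trans hx
  have hcμ : Integrable c (ρ.tilted fun x ↦ -V₁ x) := by
    refine (integrable_tilted_iff hexp₁ c).mpr (hc.bdd_mul (c := 1) hexp₁.aestronglyMeasurable ?_)
    filter_upwards [hV₁0] with x hx
    rw [norm_of_nonneg (exp_pos _).le]
    exact exp_le_one_iff.mpr (neg_nonpos.mpr hx)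
  have hdiff_le : ∀ᵐ x ∂(ρ.tilted fun x ↦ -V₁ x), ‖-V₁ x - -V₂ x‖ ≤ c x :=
    hac.ae_le (hV₁₂.mono fun x hx ↦ by rwa [Real.norm_eq_abs, ← abs_neg, neg_sub_neg, neg_sub])
  have hdiff : Integrable (fun x ↦ -V₁ x - -V₂ x) (ρ.tilted fun x ↦ -V₁ x) :=
    hcμ.mono' ((hV₁.neg.sub hV₂.neg).aestronglyMeasurable.mono_ac hac) hdiff_le
  rw [klDiv_tilted_tilted hexp₁ hexp₂ hdiff, EReal.coe_le_coe_iff]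
  have hpot : ∫ x, (-V₁ x - -V₂ x) ∂(ρ.tilted fun x ↦ -V₁ x) ≤ (∫ x, c x ∂ρ) / Z₁ :=
    (integral_mono_ae hdiff hcμ (hdiff_le.mono fun x hx ↦ (le_abs_self _).trans hx)).trans
      (integral_tilted_exp_neg_le hV₁ hV₁0 hc hc0)
  have hlog : log Z₂ - log Z₁ ≤ (∫ x, c x ∂ρ) / Z₁ :=
    calc log Z₂ - log Z₁ = log (Z₂ / Z₁) := (log_div hZ₂.ne' hZ₁.ne').symm
      _ ≤ Z₂ / Z₁ - 1 := log_le_sub_one_of_pos (div_pos hZ₂ hZ₁)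
      _ = (Z₂ - Z₁) / Z₁ := by field_simp
      _ ≤ (∫ x, c x ∂ρ) / Z₁ := by
          gcongr
          exact integral_exp_neg_sub_integral_exp_neg_le hV₁ hV₂ hV₁0 hV₂0 hc hV₁₂
  change _ + log Z₂ - log Z₁ ≤ _
  linarith [show 2 * (∫ x, c x ∂ρ) / Z₁ = (∫ x, c x ∂ρ) / Z₁ + (∫ x, c x ∂ρ) / Z₁ by ring]

end TiltedKL

section LipschitzSums

variable {E ι : Type*} [SeminormedAddCommGroup E] [Fintype ι] {ℓ : E → ℝ} {K r : ℝ}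

lemma abs_sum_sub_sum_le_of_lipschitz_ball
    (hℓ : ∀ y₁ y₂, ‖y₁‖ < r → ‖y₂‖ < r → |ℓ y₁ - ℓ y₂| ≤ K * ‖y₁ - y₂‖)
    {y₁ y₂ : ι → E} (hy₁ : ∀ i, ‖y₁ i‖ < r) (hy₂ : ∀ i, ‖y₂ i‖ < r) :
    |∑ i, ℓ (y₁ i) - ∑ i, ℓ (y₂ i)| ≤ K * ∑ i, ‖y₁ i - y₂ i‖ :=
  calc |∑ i, ℓ (y₁ i) - ∑ i, ℓ (y₂ i)| = |∑ i, (ℓ (y₁ i) - ℓ (y₂ i))| := by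
        rw [Finset.sum_sub_distrib]
    _ ≤ ∑ i, |ℓ (y₁ i) - ℓ (y₂ i)| := Finset.abs_sum_le_sum_abs _ _
    _ ≤ ∑ i, K * ‖y₁ i - y₂ i‖ := Finset.sum_le_sum fun i _ ↦ hℓ _ _ (hy₁ i) (hy₂ i)
    _ = K * ∑ i, ‖y₁ i - y₂ i‖ := (Finset.mul_sum _ _ _).symm

lemma sum_le_card_mul_of_lipschitz_ball (hK : 0 ≤ K) (hr : 0 < r)
    (hℓ : ∀ y₁ y₂, ‖y₁‖ < r → ‖y₂‖ < r → |ℓ y₁ - ℓ y₂| ≤ K * ‖y₁ - y₂‖)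
    {y : ι → E} (hy : ∀ i, ‖y i‖ < r) :
    ∑ i, ℓ (y i) ≤ Fintype.card ι * (ℓ 0 + r * K) := by
  have hterm : ∀ i, ℓ (y i) ≤ ℓ 0 + r * K := fun i ↦ by
    have h := (abs_le.mp (hℓ (y i) 0 (hy i) (by simpa using hr))).2
    rw [sub_zero] at h
    nlinarith [hy i]
  calc ∑ i, ℓ (y i) ≤ ∑ _i : ι, (ℓ 0 + r * K) := Finset.sum_le_sum fun i _ ↦ hterm i
    _ = Fintype.card ι * (ℓ 0 + r * K) := by rw [Finset.sum_const, nsmul_eq_mul, Finset.card_univ]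

end LipschitzSums

section Gibbs

variable {p d n : ℕ}

lemma natCast_mul_empRisk (L : Par p → Obs d → ℝ) (ys : Fin n → Obs d) (θ : Par p) :
    (n : ℝ) * empRisk L ys θ = ∑ i, L θ (ys i) := by
  rcases Nat.eq_zero_or_pos n with rfl | hn
  · simp
  · rw [empRisk, ← mul_assoc, mul_one_div_cancel (by positivity), one_mul]

lemma gibbs_eq_tilted (ρ0 : Measure (Par p)) (L : Par p → Obs d → ℝ) (ys : Fin n → Obs d)
    (W : ℝ) : gibbs ρ0 L ys W = ρ0.tilted fun θ ↦ -(W * ∑ i, L θ (ys i)) := by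
  have hpot : (fun θ ↦ -(n * W) * empRisk L ys θ) = fun θ ↦ -(W * ∑ i, L θ (ys i)) := by
    funext θ
    rw [← natCast_mul_empRisk]
    ring
  rw [← hpot]
  rfl

variable {ρ0 : Measure (Par p)} {L : Par p → Obs d → ℝ} {C : Par p → ℝ} {r W : ℝ}

lemma Assumption1.exists_measurable_lipschitz_data {P : Measure (Obs d)}
    (hL : Assumption1 ρ0 P L) (hr : 0 < r) :
    ∃ C : Par p → ℝ, Measurable C ∧ Integrable C ρ0 ∧ (∀ᵐ θ ∂ρ0, 0 ≤ C θ) ∧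
      ∀ᵐ θ ∂ρ0, ∀ y₁ y₂, ‖y₁‖ < r → ‖y₂‖ < r → |L θ y₁ - L θ y₂| ≤ C θ * ‖y₁ - y₂‖ := by
  obtain ⟨C, hC0, hCexp, hClip⟩ := hL.lipschitz_data r hr
  have hCm : AEMeasurable C ρ0 := aemeasurable_of_aemeasurable_exp hCexp.aemeasurable
  have hCint : Integrable C ρ0 := hCexp.mono' hCm.aestronglyMeasurable <| ae_of_all _ fun θ ↦ by
    rw [norm_of_nonneg (hC0 θ)]
    linarith [add_one_le_exp (C θ)]
  refine ⟨hCm.mk C, hCm.measurable_mk, hCint.congr hCm.ae_eq_mk, ?_, ?_⟩ <;>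
    filter_upwards [hCm.ae_eq_mk] with θ hθ <;> rw [← hθ]
  exacts [hC0 θ, hClip θ]

variable [IsFiniteMeasure ρ0]

lemma klDiv_gibbs_le [NeZero ρ0] (hLm : Measurable (Function.uncurry L))
    (hL0 : ∀ θ y, 0 ≤ L θ y) (hC : Integrable C ρ0)
    (hClip : ∀ᵐ θ ∂ρ0, ∀ y₁ y₂, ‖y₁‖ < r → ‖y₂‖ < r → |L θ y₁ - L θ y₂| ≤ C θ * ‖y₁ - y₂‖)
    (hW : 0 ≤ W) {ys₁ ys₂ : Fin n → Obs d} (hys₁ : ∀ i, ‖ys₁ i‖ < r) (hys₂ : ∀ i, ‖ys₂ i‖ < r) :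
    klDiv (gibbs ρ0 L ys₁ W) (gibbs ρ0 L ys₂ W) ≤
      ((2 * (∫ θ, C θ ∂ρ0) / (∫ θ, exp (-(W * ∑ i, L θ (ys₁ i))) ∂ρ0) *
        (W * ∑ i, ‖ys₁ i - ys₂ i‖) : ℝ) : EReal) := by
  have hV (ys : Fin n → Obs d) : AEMeasurable (fun θ ↦ W * ∑ i, L θ (ys i)) ρ0 :=
    ((Finset.measurable_sum _ fun i _ ↦ hLm.of_uncurry_right).const_mul W).aemeasurable
  have hV0 (ys : Fin n → Obs d) : ∀ᵐ θ ∂ρ0, 0 ≤ W * ∑ i, L θ (ys i) :=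
    ae_of_all _ fun θ ↦ mul_nonneg hW (Finset.sum_nonneg fun i _ ↦ hL0 θ _)
  rw [gibbs_eq_tilted, gibbs_eq_tilted]
  refine (klDiv_tilted_exp_neg_le (hV ys₁) (hV ys₂) (hV0 ys₁) (hV0 ys₂)
    (hC.mul_const (W * ∑ i, ‖ys₁ i - ys₂ i‖)) ?_).trans_eq
      (by rw [integral_mul_const]; congr 1; ring)
  filter_upwards [hClip] with θ hθ
  calc |W * ∑ i, L θ (ys₁ i) - W * ∑ i, L θ (ys₂ i)|
      = W * |∑ i, L θ (ys₁ i) - ∑ i, L θ (ys₂ i)| := by rw [← mul_sub, abs_mul, abs_of_nonneg hW]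
    _ ≤ W * (C θ * ∑ i, ‖ys₁ i - ys₂ i‖) :=
        mul_le_mul_of_nonneg_left (abs_sum_sub_sum_le_of_lipschitz_ball hθ hys₁ hys₂) hW
    _ = C θ * (W * ∑ i, ‖ys₁ i - ys₂ i‖) := by ring

lemma measureReal_mul_exp_le_integral_exp_neg_sum (hLm : Measurable (Function.uncurry L))
    (hL0 : ∀ θ y, 0 ≤ L θ y) (hCm : Measurable C) (hC0 : ∀ᵐ θ ∂ρ0, 0 ≤ C θ)
    (hr : 0 < r)
    (hClip : ∀ᵐ θ ∂ρ0, ∀ y₁ y₂, ‖y₁‖ < r → ‖y₂‖ < r → |L θ y₁ - L θ y₂| ≤ C θ * ‖y₁ - y₂‖)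
    (hW : 0 ≤ W) {ys : Fin n → Obs d} (hys : ∀ i, ‖ys i‖ < r) (M : ℝ) :
    ρ0.real {θ | L θ 0 + r * C θ ≤ M} * exp (-(n * W * M)) ≤
      ∫ θ, exp (-(W * ∑ i, L θ (ys i))) ∂ρ0 := by
  refine measureReal_mul_exp_neg_le_integral_exp_neg
    (integrable_exp_neg_of_nonneg
      ((Finset.measurable_sum _ fun i _ ↦ hLm.of_uncurry_right).const_mul W).aemeasurable
      (ae_of_all _ fun θ ↦ mul_nonneg hW (Finset.sum_nonneg fun i _ ↦ hL0 θ _)))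
    (measurableSet_le (hLm.of_uncurry_right.add (hCm.const_mul r)) measurable_const) ?_
  filter_upwards [hC0, hClip] with θ hθ0 hθ hθM
  calc W * ∑ i, L θ (ys i) ≤ W * (n * (L θ 0 + r * C θ)) := by
        gcongr
        simpa using sum_le_card_mul_of_lipschitz_ball hθ0 hr hθ hys
    _ ≤ W * (n * M) := by gcongr; exact hθM
    _ = n * W * M := by ring

end Gibbs

theorem gibbs_stability_kl_general
    {p d : ℕ}
    (ρ0 : Measure (Par p)) (P : Measure (Obs d))
    [IsProbabilityMeasure ρ0]
    (L : Par p → Obs d → ℝ)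
    (hL : Assumption1 ρ0 P L)
    (r : ℝ) (hr : 0 < r) :
    ∃ a > (0 : ℝ), ∃ b > (0 : ℝ),
      ∀ (n : ℕ) (W : ℝ), 0 < W →
        ∀ ys1 ys2 : Fin n → Obs d,
          (∀ i, ‖ys1 i‖ < r) → (∀ i, ‖ys2 i‖ < r) →
          max (klDiv (gibbs ρ0 L ys1 W) (gibbs ρ0 L ys2 W))
              (klDiv (gibbs ρ0 L ys2 W) (gibbs ρ0 L ys1 W))
            ≤ ((a * W * (1 + Real.exp (b * n * W)) ^ 2 * ∑ i, ‖ys1 i - ys2 i‖ : ℝ) : EReal) := by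
  obtain ⟨C, hCm, hCint, hC0, hClip⟩ := hL.exists_measurable_lipschitz_data hr
  obtain ⟨M, hM⟩ := exists_measure_setOf_le_natCast_ne_zero (ρ := ρ0) fun θ ↦ L θ 0 + r * C θ
  set δ := ρ0.real {θ | L θ 0 + r * C θ ≤ M}
  have hδ : 0 < δ := ENNReal.toReal_pos hM (measure_ne_top _ _)
  have hJ : 0 ≤ ∫ θ, C θ ∂ρ0 := integral_nonneg_of_ae hC0
  refine ⟨2 * (∫ θ, C θ ∂ρ0) / δ + 1, by positivity, M + 1, by positivity,
    fun n W hW ys1 ys2 hys1 hys2 ↦ ?_⟩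
  have hbound (ys ys' : Fin n → Obs d) (hys : ∀ i, ‖ys i‖ < r) (hys' : ∀ i, ‖ys' i‖ < r) :
      klDiv (gibbs ρ0 L ys W) (gibbs ρ0 L ys' W) ≤
        (((2 * (∫ θ, C θ ∂ρ0) / δ + 1) * W * (1 + exp ((M + 1) * n * W)) ^ 2 *
          ∑ i, ‖ys i - ys' i‖ : ℝ) : EReal) := by
    refine (klDiv_gibbs_le hL.measurable hL.nonneg hCint hClip hW.le hys hys').trans ?_
    rw [EReal.coe_le_coe_iff, mul_right_comm _ W, mul_assoc _ W]
    gcongr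
    exact div_le_mul_one_add_exp_sq (by positivity) hδ hW.le
      (measureReal_mul_exp_le_integral_exp_neg_sum hL.measurable hL.nonneg hCm hC0 hr hClip
        hW.le hys M)
  refine max_le (hbound ys1 ys2 hys1 hys2) ?_
  simpa only [norm_sub_rev (ys2 _)] using hbound ys2 ys1 hys2 hys1

/-- Theorem 1, KL part: stability of Gibbs posteriors in the data.
There are constants `a, b > 0`, depending only on the prior (and loss) and on `r`, such that
for all sample sizes, all `W > 0` and all pairs of datasets bounded in norm by `r`,
`max(D_KL(ρ̂₁‖ρ̂₂), D_KL(ρ̂₂‖ρ̂₁)) ≤ a W (1 + e^{bnW})² ∑ᵢ ‖y_{1,i} − y_{2,i}‖`. -/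
theorem gibbs_stability_kl
    {p d : ℕ}
    (ρ0 : Measure (Par p)) (P : Measure (Obs d))
    [IsProbabilityMeasure ρ0] [IsProbabilityMeasure P]
    (L : Par p → Obs d → ℝ) (f : Par p → ℝ)
    (hL : Assumption1 ρ0 P L) (hprior : Assumption2 ρ0 f)
    (r : ℝ) (hr : 0 < r) :
    ∃ a > (0 : ℝ), ∃ b > (0 : ℝ),
      ∀ (n : ℕ) (W : ℝ), 0 < W →
        ∀ ys1 ys2 : Fin n → Obs d,
          (∀ i, ‖ys1 i‖ < r) → (∀ i, ‖ys2 i‖ < r) →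
          max (klDiv (gibbs ρ0 L ys1 W) (gibbs ρ0 L ys2 W))
              (klDiv (gibbs ρ0 L ys2 W) (gibbs ρ0 L ys1 W))
            ≤ ((a * W * (1 + Real.exp (b * n * W)) ^ 2 * ∑ i, ‖ys1 i - ys2 i‖ : ℝ) : EReal) :=
  gibbs_stability_kl_general ρ0 P L hL r hr

end
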